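/- arXiv:2510.23402 — 4 statements merged into one kernel-verified Lean document; each statement's English description precedes it below -/
import Mathlib

section
/- Let R be a finite set, P a probability mass function on R with full support, q : R → ℝ, λ > 0, and let α > max_r q(r) satisfy Σ_r λP(r)/(α − q(r)) = 1. Define y*(r) = λP(r)/(α − q(r)). Then y* is a probability mass function on R and for every probability mass function y on R with full support, q·y − λ·KL(P‖y) ≤ q·y* − λ·KL(P‖y*), i.e., y* maximizes the reverse-KL-regularized linear objective over the simplex. -/
/-!
Since `λ P(r) / y*(r) = α − q(r)`, the bound `log t ≤ t − 1` at `t = y(r) / y*(r)` gives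
`λ (KL(P‖y*) − KL(P‖y)) ≤ Σ_r (α − q(r)) (y(r) − y*(r)) = q·y* − q·y`,
the multiplier `α` dropping out because `y` and `y*` have the same total mass.
-/

open Finset Real

noncomputable def discreteKL {R : Type*} [Fintype R] (P y : R → ℝ) : ℝ :=
  ∑ r, P r * log (P r / y r)

section

variable {R : Type*} [Fintype R]

theorem discreteKL_sub_discreteKL_le {P y z : R → ℝ} (hP : ∀ r, 0 ≤ P r)
    (hy : ∀ r, 0 < y r) (hz : ∀ r, 0 < z r) :
    discreteKL P z - discreteKL P y ≤ ∑ r, P r * (y r / z r - 1) := by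
  rw [discreteKL, discreteKL, ← sum_sub_distrib]
  refine sum_le_sum fun r _ => ?_
  rcases (hP r).eq_or_lt with hPr | hPr
  · simp [← hPr]
  have hlog : P r * log (P r / z r) - P r * log (P r / y r) = P r * log (y r / z r) := by
    rw [log_div hPr.ne' (hz r).ne', log_div hPr.ne' (hy r).ne', log_div (hy r).ne' (hz r).ne']
    ring
  rw [hlog]
  exact mul_le_mul_of_nonneg_left (log_le_sub_one_of_pos (div_pos (hy r) (hz r))) hPr.le

/-- `hstat` is the stationarity condition `q(r) + λ P(r) / z(r) = α` of the Lagrangian with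
multiplier `α` for the mass constraint. -/
theorem sum_mul_sub_mul_discreteKL_le_of_stationary {q P y z : R → ℝ} {lam α : ℝ}
    (hlam : 0 ≤ lam) (hP : ∀ r, 0 ≤ P r) (hy : ∀ r, 0 < y r) (hz : ∀ r, 0 < z r)
    (hmass : ∑ r, y r = ∑ r, z r) (hstat : ∀ r, lam * P r = (α - q r) * z r) :
    ∑ r, q r * y r - lam * discreteKL P y ≤ ∑ r, q r * z r - lam * discreteKL P z := by
  have hlin : lam * ∑ r, P r * (y r / z r - 1) = ∑ r, q r * z r - ∑ r, q r * y r :=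
    calc lam * ∑ r, P r * (y r / z r - 1)
        = ∑ r, ((α - q r) * y r - (α - q r) * z r) := by
          rw [mul_sum]
          refine sum_congr rfl fun r _ => ?_
          field_simp [(hz r).ne']
          linear_combination (y r - z r) * hstat r
      _ = ∑ r, q r * z r - ∑ r, q r * y r := by
          simp only [sub_mul, sum_sub_distrib, ← mul_sum, hmass]
          ring
  linarith [mul_le_mul_of_nonneg_left (discreteKL_sub_discreteKL_le hP hy hz) hlam]

end

theorem stmt_2_general {R : Type*} [Fintype R] [Nonempty R]
    (q : R → ℝ) (P : R → ℝ) (hP0 : ∀ r, 0 < P r)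
    (lam : ℝ) (hlam : 0 < lam)
    (α : ℝ) (hα : Finset.univ.sup' Finset.univ_nonempty q < α)
    (hnorm : ∑ r, lam * P r / (α - q r) = 1)
    (ystar : R → ℝ) (hystar : ∀ r, ystar r = lam * P r / (α - q r)) :
    (∀ r, 0 ≤ ystar r) ∧ (∑ r, ystar r = 1) ∧
      (∀ y : R → ℝ, (∀ r, 0 < y r) → (∑ r, y r = 1) →
        (∑ r, q r * y r) - lam * ∑ r, P r * Real.log (P r / y r)
          ≤ (∑ r, q r * ystar r) - lam * ∑ r, P r * Real.log (P r / ystar r)) := by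
  have hαq : ∀ r, 0 < α - q r := fun r =>
    sub_pos.2 ((le_sup' q (mem_univ r)).trans_lt hα)
  have hystar_pos : ∀ r, 0 < ystar r := fun r => by
    rw [hystar]
    exact div_pos (mul_pos hlam (hP0 r)) (hαq r)
  have hystar_sum : ∑ r, ystar r = 1 := by simpa only [hystar] using hnorm
  refine ⟨fun r => (hystar_pos r).le, hystar_sum, fun y hy hy1 => ?_⟩
  refine sum_mul_sub_mul_discreteKL_le_of_stationary (α := α) hlam.le (fun r => (hP0 r).le) hy
    hystar_pos (hy1.trans hystar_sum.symm) fun r => ?_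
  rw [hystar, mul_div_cancel₀ _ (hαq r).ne']

/-- The candidate `y*(r) = λ P(r) / (α − q(r))` is a probability mass function and
maximizes the reverse-KL-regularized linear objective over full-support pmfs. -/
theorem stmt_2 {R : Type*} [Fintype R] [Nonempty R]
    (q : R → ℝ) (P : R → ℝ) (hP0 : ∀ r, 0 < P r) (hP1 : ∑ r, P r = 1)
    (lam : ℝ) (hlam : 0 < lam)
    (α : ℝ) (hα : Finset.univ.sup' Finset.univ_nonempty q < α)
    (hnorm : ∑ r, lam * P r / (α - q r) = 1)
    (ystar : R → ℝ) (hystar : ∀ r, ystar r = lam * P r / (α - q r)) :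
    (∀ r, 0 ≤ ystar r) ∧ (∑ r, ystar r = 1) ∧
      (∀ y : R → ℝ, (∀ r, 0 < y r) → (∑ r, y r = 1) →
        (∑ r, q r * y r) - lam * ∑ r, P r * Real.log (P r / y r)
          ≤ (∑ r, q r * ystar r) - lam * ∑ r, P r * Real.log (P r / ystar r)) :=
  stmt_2_general q P hP0 lam hlam α hα hnorm ystar hystar
end

section
/- Under the hypotheses of the reverse-KL inner problem (finite R, full-support P, λ > 0, normalizing constant α > max q with Σ_r λP(r)/(α − q(r)) = 1, maximizer y*(r) = λP(r)/(α − q(r))), the attained optimal value equals α − λ − λ·Σ_r P(r)·log((α − q(r))/λ). -/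
/-- Attained optimal value of the reverse-KL regularized inner problem:
`q·y* − λ·KL(P‖y*) = α − λ − λ Σ_r P(r) log((α − q(r))/λ)`. -/
theorem stmt_3 {R : Type*} [Fintype R] [Nonempty R]
    (q : R → ℝ) (P : R → ℝ) (hP0 : ∀ r, 0 < P r) (hP1 : ∑ r, P r = 1)
    (lam : ℝ) (hlam : 0 < lam)
    (α : ℝ) (hα : Finset.univ.sup' Finset.univ_nonempty q < α)
    (hnorm : ∑ r, lam * P r / (α - q r) = 1)
    (ystar : R → ℝ) (hystar : ∀ r, ystar r = lam * P r / (α - q r)) :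
    (∑ r, q r * ystar r) - lam * ∑ r, P r * Real.log (P r / ystar r)
      = α - lam - lam * ∑ r, P r * Real.log ((α - q r) / lam) := by
  have hpos : ∀ r, 0 < α - q r := fun r =>
    sub_pos.2 (lt_of_le_of_lt (Finset.le_sup' q (Finset.mem_univ r)) hα)
  have h1 : (∑ r, q r * ystar r) = α - lam := by
    have key : ∀ r ∈ Finset.univ, q r * ystar r
        = α * (lam * P r / (α - q r)) - lam * P r := by
      intro r _
      have h := (hpos r).ne'
      rw [hystar]
      field_simp
      ring
    rw [Finset.sum_congr rfl key, Finset.sum_sub_distrib, ← Finset.mul_sum,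
      ← Finset.mul_sum, hnorm, hP1]
    ring
  have h2 : ∀ r, P r / ystar r = (α - q r) / lam := by
    intro r
    rw [hystar]
    field_simp [(hP0 r).ne', (hpos r).ne']
  simp_rw [h2]
  rw [h1]
end

section
/- FPFS rate compliance: if assigned times ê₁ < ê₂ < … < ê_N satisfy ê_{j+1} − ê_j ≥ σ where σ = 60/τ for a positive integer τ, then every half-open time window [u, u+60) of length 60 contains at most τ of the assigned times. -/
/-- FPFS rate compliance: if consecutive assigned times are separated by at
least `σ = 60/τ`, then any sliding 60-minute window contains at most `τ`
assigned times. -/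
theorem stmt_9 (N : ℕ) (τ : ℕ) (hτ : 0 < τ) (σ : ℝ) (hσ : σ = 60 / τ)
    (ehat : ℕ → ℝ) (hsep : ∀ j, 1 ≤ j → j < N → σ ≤ ehat (j + 1) - ehat j) :
    ∀ u : ℝ,
      ((Finset.Icc 1 N).filter (fun j => u ≤ ehat j ∧ ehat j < u + 60)).card ≤ τ := by
  have hσpos : 0 < σ := by
    rw [hσ]; positivity
  -- key: telescoping separation
  have key : ∀ i j : ℕ, 1 ≤ i → i ≤ j → j ≤ N → ((j - i : ℕ) : ℝ) * σ ≤ ehat j - ehat i := by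
    intro i j hi hij hjN
    induction j with
    | zero => omega
    | succ j ih =>
      rcases eq_or_lt_of_le hij with h | h
      · simp [← h]
      · have hij' : i ≤ j := by omega
        have h1 : ((j - i : ℕ) : ℝ) * σ ≤ ehat j - ehat i := ih hij' (by omega)
        have h2 : σ ≤ ehat (j + 1) - ehat j := hsep j (by omega) (by omega)
        have : ((j + 1 - i : ℕ) : ℝ) = ((j - i : ℕ) : ℝ) + 1 := by
          push_cast [Nat.sub_add_comm hij']; ring
        rw [this]
        nlinarith
  intro u
  by_contra hcard
  push_neg at hcard
  set S := (Finset.Icc 1 N).filter (fun j => u ≤ ehat j ∧ ehat j < u + 60) with hS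
  have hne : S.Nonempty := Finset.card_pos.mp (by omega)
  set a := S.min' hne
  set b := S.max' hne
  have haS : a ∈ S := S.min'_mem hne
  have hbS : b ∈ S := S.max'_mem hne
  have hsub : S ⊆ Finset.Icc a b := fun x hx =>
    Finset.mem_Icc.mpr ⟨S.min'_le x hx, S.le_max' x hx⟩
  have hcard2 : τ + 1 ≤ (Finset.Icc a b).card := le_trans hcard (Finset.card_le_card hsub)
  rw [Nat.card_Icc] at hcard2
  have hab : τ ≤ b - a := by omega
  have ha : a ∈ Finset.Icc 1 N ∧ u ≤ ehat a ∧ ehat a < u + 60 := by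
    simpa [hS, Finset.mem_filter] using haS
  have hb : b ∈ Finset.Icc 1 N ∧ u ≤ ehat b ∧ ehat b < u + 60 := by
    simpa [hS, Finset.mem_filter] using hbS
  have ha1 : 1 ≤ a := (Finset.mem_Icc.mp ha.1).1
  have hbN : b ≤ N := (Finset.mem_Icc.mp hb.1).2
  have hle : a ≤ b := by omega
  have hmain : ((b - a : ℕ) : ℝ) * σ ≤ ehat b - ehat a := key a b ha1 hle hbN
  have hτσ : (τ : ℝ) * σ = 60 := by
    rw [hσ]; field_simp
  have h60 : (60 : ℝ) ≤ ehat b - ehat a := by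
    calc (60 : ℝ) = (τ : ℝ) * σ := hτσ.symm
    _ ≤ ((b - a : ℕ) : ℝ) * σ := by
        apply mul_le_mul_of_nonneg_right _ hσpos.le
        exact_mod_cast hab
    _ ≤ ehat b - ehat a := hmain
  linarith [ha.2.1, hb.2.2]
end

section
/- The Jaccard distance d(A,B) = 1 − |A ∩ B|/|A ∪ B| (with d(A,B) = 0 when both sets are empty) defines a metric on the finite subsets of a set: it is nonnegative, symmetric, vanishes exactly when A = B, and satisfies the triangle inequality d(A,C) ≤ d(A,B) + d(B,C). -/
open Finset
open scoped symmDiff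

private lemma jaccard_steinhaus (s1 s2 s3 a b c : ℝ) (hs1 : 0 ≤ s1) (hs2 : 0 ≤ s2)
    (hs3 : 0 ≤ s3) (ha : 0 ≤ a) (hb : 0 ≤ b) (hc : 0 ≤ c) (h3 : s3 ≤ s1 + s2) (hb1 : b ≤ s1 + a) (hb2 : b ≤ s2 + c)
    (hD1 : 0 < s1 + a + b) (hD2 : 0 < s2 + b + c) (hD3 : 0 < s3 + a + c) :
    s3 / (s3 + a + c) ≤ s1 / (s1 + a + b) + s2 / (s2 + b + c) := by
  have hD : (0:ℝ) < s1 + s2 + a + c := by nlinarith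
  have step1 : s3 / (s3 + a + c) ≤ (s1 + s2) / (s1 + s2 + a + c) := by
    rw [div_le_div_iff₀ hD3 hD]; nlinarith [mul_nonneg (add_nonneg ha hc) (sub_nonneg.2 h3)]
  calc s3 / (s3 + a + c) ≤ (s1 + s2) / (s1 + s2 + a + c) := step1
    _ = s1 / (s1 + s2 + a + c) + s2 / (s1 + s2 + a + c) := by ring
    _ ≤ s1 / (s1 + a + b) + s2 / (s2 + b + c) := by
        have t1 : s1 / (s1 + s2 + a + c) ≤ s1 / (s1 + a + b) := by
          exact div_le_div_of_nonneg_left hs1 hD1 (by linarith)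
        have t2 : s2 / (s1 + s2 + a + c) ≤ s2 / (s2 + b + c) := by
          exact div_le_div_of_nonneg_left hs2 hD2 (by linarith)
        linarith

private lemma jaccard_card_symmDiff {α : Type*} [DecidableEq α] (A B : Finset α) :
    ((A ∪ B).card : ℝ) = (A ∆ B).card + (A ∩ B).card := by
  have : (A ∆ B).card + (A ∩ B).card = (A ∪ B).card := by
    rw [← Finset.card_union_of_disjoint]
    · congr 1
      ext x; simp only [Finset.mem_union, Finset.mem_inter, Finset.mem_symmDiff]; tauto
    · simp only [Finset.disjoint_left, Finset.mem_symmDiff, Finset.mem_inter]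
      tauto
  exact_mod_cast this.symm

/-- The Jaccard distance on finite sets is a metric: nonnegative, symmetric,
vanishing exactly on equal sets, and satisfying the triangle inequality. -/
theorem stmt_12 {α : Type*} [DecidableEq α]
    (d : Finset α → Finset α → ℝ)
    (hd : ∀ A B : Finset α,
      d A B = if A ∪ B = ∅ then 0 else 1 - ((A ∩ B).card : ℝ) / ((A ∪ B).card : ℝ)) :
    (∀ A B : Finset α, 0 ≤ d A B) ∧
    (∀ A B : Finset α, d A B = d B A) ∧
    (∀ A B : Finset α, d A B = 0 ↔ A = B) ∧
    (∀ A B C : Finset α, d A C ≤ d A B + d B C) := by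
  -- key formula: on nonempty union, d A B = |A∆B| / (|A∆B| + |A| + |B|) * 2
  have key : ∀ A B : Finset α, A ∪ B ≠ ∅ →
      d A B = 2 * ((A ∆ B).card : ℝ) / (((A ∆ B).card : ℝ) + A.card + B.card) := by
    intro A B h
    have hn : (0:ℝ) < (A ∪ B).card := by
      have := Finset.card_pos.2 (Finset.nonempty_of_ne_empty h)
      exact_mod_cast this
    have h2 : ((A ∆ B).card : ℝ) + A.card + B.card = 2 * (A ∪ B).card := by
      have hi : ((A ∩ B).card : ℝ) + (A ∪ B).card = A.card + B.card := by
        exact_mod_cast Finset.card_inter_add_card_union A B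
      have := jaccard_card_symmDiff A B
      linarith
    rw [hd A B, if_neg h, h2]
    have hsd := jaccard_card_symmDiff A B
    field_simp
    nlinarith [hsd, hn]
  have nonneg : ∀ A B : Finset α, 0 ≤ d A B := by
    intro A B
    rw [hd A B]
    split_ifs with h
    · exact le_refl 0
    · have hn : (0:ℝ) < (A ∪ B).card := by
        exact_mod_cast Finset.card_pos.2 (Finset.nonempty_of_ne_empty h)
      have hle : ((A ∩ B).card : ℝ) ≤ (A ∪ B).card := by
        exact_mod_cast Finset.card_le_card (Finset.inter_subset_union)
      have : ((A ∩ B).card : ℝ) / (A ∪ B).card ≤ 1 := by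
        rw [div_le_one hn]; exact hle
      linarith
  refine ⟨nonneg, ?_, ?_, ?_⟩
  · intro A B
    rw [hd A B, hd B A, Finset.union_comm, Finset.inter_comm]
  · intro A B
    rw [hd A B]
    split_ifs with h
    · constructor
      · intro _
        have hA : A = ∅ := Finset.union_eq_empty.mp h |>.1
        have hB : B = ∅ := Finset.union_eq_empty.mp h |>.2
        rw [hA, hB]
      · intro _; rfl
    · have hn : (0:ℝ) < (A ∪ B).card := by
        exact_mod_cast Finset.card_pos.2 (Finset.nonempty_of_ne_empty h)
      constructor
      · intro he
        have hdiv : ((A ∩ B).card : ℝ) / (A ∪ B).card = 1 := by linarith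
        have : ((A ∩ B).card : ℝ) = (A ∪ B).card := by
          rw [div_eq_one_iff_eq hn.ne'] at hdiv; exact hdiv
        have hcard : (A ∩ B).card = (A ∪ B).card := by exact_mod_cast this
        have heq : A ∩ B = A ∪ B :=
          Finset.eq_of_subset_of_card_le Finset.inter_subset_union (le_of_eq hcard.symm)
        apply Finset.Subset.antisymm
        · intro x hx
          have : x ∈ A ∩ B := heq ▸ Finset.mem_union_left B hx
          exact (Finset.mem_inter.mp this).2
        · intro x hx
          have : x ∈ A ∩ B := heq ▸ Finset.mem_union_right A hx
          exact (Finset.mem_inter.mp this).1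
      · intro he
        subst he
        rw [Finset.union_self, Finset.inter_self] at *
        rw [div_self (by positivity)]
        ring
  · intro A B C
    by_cases hAC : A ∪ C = ∅
    · rw [hd A C, if_pos hAC]
      have := nonneg A B; have := nonneg B C; linarith
    by_cases hAB : A ∪ B = ∅
    · have hA : A = ∅ := (Finset.union_eq_empty.mp hAB).1
      have hB : B = ∅ := (Finset.union_eq_empty.mp hAB).2
      have : d A B = 0 := by rw [hd A B, if_pos hAB]
      rw [this, hA, hB]; simp
    by_cases hBC : B ∪ C = ∅
    · have hB : B = ∅ := (Finset.union_eq_empty.mp hBC).1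
      have hC : C = ∅ := (Finset.union_eq_empty.mp hBC).2
      have h0 : d B C = 0 := by rw [hd B C, if_pos hBC]
      rw [h0, hB, hC] at *
      linarith
    · rw [key A C hAC, key A B hAB, key B C hBC]
      have h3 : ((A ∆ C).card : ℝ) ≤ (A ∆ B).card + (B ∆ C).card := by
        have hsub : A ∆ C ⊆ (A ∆ B) ∪ (B ∆ C) := symmDiff_triangle A B C
        have := (Finset.card_le_card hsub).trans (Finset.card_union_le _ _)
        exact_mod_cast this
      have hb1 : (B.card : ℝ) ≤ (A ∆ B).card + A.card := by
        have hsub : B ⊆ (A ∆ B) ∪ A := by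
          intro x hx
          by_cases hxa : x ∈ A
          · exact Finset.mem_union_right _ hxa
          · exact Finset.mem_union_left _ (Finset.mem_symmDiff.mpr (Or.inr ⟨hx, hxa⟩))
        have := (Finset.card_le_card hsub).trans (Finset.card_union_le _ _)
        exact_mod_cast this
      have hb2 : (B.card : ℝ) ≤ (B ∆ C).card + C.card := by
        have hsub : B ⊆ (B ∆ C) ∪ C := by
          intro x hx
          by_cases hxc : x ∈ C
          · exact Finset.mem_union_right _ hxc
          · exact Finset.mem_union_left _ (Finset.mem_symmDiff.mpr (Or.inl ⟨hx, hxc⟩))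
        have := (Finset.card_le_card hsub).trans (Finset.card_union_le _ _)
        exact_mod_cast this
      have hpos : ∀ X Y : Finset α, X ∪ Y ≠ ∅ →
          (0:ℝ) < ((X ∆ Y).card : ℝ) + X.card + Y.card := by
        intro X Y h
        have h2 : ((X ∆ Y).card : ℝ) + X.card + Y.card = 2 * (X ∪ Y).card := by
          have hi : ((X ∩ Y).card : ℝ) + (X ∪ Y).card = X.card + Y.card := by
            exact_mod_cast Finset.card_inter_add_card_union X Y
          have := jaccard_card_symmDiff X Y
          linarith
        rw [h2]
        have hn : (0:ℝ) < (X ∪ Y).card := by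
          exact_mod_cast Finset.card_pos.2 (Finset.nonempty_of_ne_empty h)
        linarith
      have main := jaccard_steinhaus ((A ∆ B).card : ℝ) ((B ∆ C).card : ℝ)
        ((A ∆ C).card : ℝ) (A.card : ℝ) (B.card : ℝ) (C.card : ℝ)
        (by positivity) (by positivity) (by positivity) (by positivity) (by positivity)
        (by positivity) h3 hb1 hb2 (hpos A B hAB) (hpos B C hBC) (hpos A C hAC)
      rw [mul_div_assoc, mul_div_assoc, mul_div_assoc]
      linarith
end
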